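/- For two row-stochastic matrices P₁, P₂ and α ∈ (0,1), the corresponding PageRank vectors π₁, π₂ (with the same teleport probability vector z) satisfy ‖π₁ - π₂‖₁ ≤ (α/(1-α))·‖(P₁ - P₂)ᵀ π₂‖₁. -/

import Mathlib

/-!
The difference `d = π₁ - π₂` solves the perturbed fixed-point equation
`d = α P₁ᵀ d + α (P₁ - P₂)ᵀ π₂`. Since `P₁ᵀ` does not increase the ℓ¹ norm, this gives
`‖d‖₁ ≤ α ‖d‖₁ + α ‖(P₁ - P₂)ᵀ π₂‖₁`, and the bound follows by solving for `‖d‖₁`.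
-/

open Matrix

theorem Matrix.sum_abs_transpose_mulVec_le {ι : Type*} [Fintype ι] {P : Matrix ι ι ℝ}
    (hnonneg : ∀ i j, 0 ≤ P i j) (hrow : ∀ i, ∑ j, P i j ≤ 1) (v : ι → ℝ) :
    ∑ i, |(Pᵀ *ᵥ v) i| ≤ ∑ i, |v i| :=
  calc ∑ i, |(Pᵀ *ᵥ v) i|
      ≤ ∑ i, ∑ j, P j i * |v j| := by
        refine Finset.sum_le_sum fun i _ => (Finset.abs_sum_le_sum_abs _ _).trans_eq ?_
        simp only [transpose_apply, abs_mul, abs_of_nonneg (hnonneg _ i)]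
    _ = ∑ j, (∑ i, P j i) * |v j| := by
        rw [Finset.sum_comm]
        simp only [Finset.sum_mul]
    _ ≤ ∑ j, |v j| :=
        Finset.sum_le_sum fun j _ => mul_le_of_le_one_left (abs_nonneg _) (hrow j)

theorem pagerank_sub_eq {ι R : Type*} [Fintype ι] [CommRing R]
    {P₁ P₂ : Matrix ι ι R} {α : R} {z π₁ π₂ : ι → R}
    (hπ₁ : π₁ = α • P₁ᵀ *ᵥ π₁ + z) (hπ₂ : π₂ = α • P₂ᵀ *ᵥ π₂ + z) :
    π₁ - π₂ = α • P₁ᵀ *ᵥ (π₁ - π₂) + α • (P₁ - P₂)ᵀ *ᵥ π₂ := by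
  conv_lhs => rw [hπ₁, hπ₂]
  rw [mulVec_sub, transpose_sub, sub_mulVec]
  module

theorem pagerank_perturbation_bound_general {N : ℕ} (P₁ P₂ : Matrix (Fin N) (Fin N) ℝ)
    (h1nonneg : ∀ i j, 0 ≤ P₁ i j) (h1row : ∀ i, ∑ j, P₁ i j = 1)
    (α : ℝ) (hα0 : 0 < α) (hα1 : α < 1) (z π₁ π₂ : Fin N → ℝ)
    (hπ₁ : π₁ = α • P₁ᵀ.mulVec π₁ + (1 - α) • z)
    (hπ₂ : π₂ = α • P₂ᵀ.mulVec π₂ + (1 - α) • z) :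
    ∑ i, |π₁ i - π₂ i| ≤ (α / (1 - α)) * ∑ i, |(P₁ - P₂)ᵀ.mulVec π₂ i| := by
  set e := (P₁ - P₂)ᵀ *ᵥ π₂
  have hd := pagerank_sub_eq hπ₁ hπ₂
  have hcontract : ∑ i, |(P₁ᵀ *ᵥ (π₁ - π₂)) i| ≤ ∑ i, |π₁ i - π₂ i| :=
    sum_abs_transpose_mulVec_le h1nonneg (fun i => (h1row i).le) (π₁ - π₂)
  have hself : ∑ i, |π₁ i - π₂ i| ≤ α * ∑ i, |π₁ i - π₂ i| + α * ∑ i, |e i| :=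
    calc ∑ i, |π₁ i - π₂ i|
        = ∑ i, |α * (P₁ᵀ *ᵥ (π₁ - π₂)) i + α * e i| :=
          Finset.sum_congr rfl fun i _ => congrArg abs (congrFun hd i)
      _ ≤ ∑ i, (α * |(P₁ᵀ *ᵥ (π₁ - π₂)) i| + α * |e i|) := by
          refine Finset.sum_le_sum fun i _ => (abs_add_le _ _).trans_eq ?_
          rw [abs_mul, abs_mul, abs_of_pos hα0]
      _ = α * ∑ i, |(P₁ᵀ *ᵥ (π₁ - π₂)) i| + α * ∑ i, |e i| := by
          rw [Finset.sum_add_distrib, Finset.mul_sum, Finset.mul_sum]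
      _ ≤ α * ∑ i, |π₁ i - π₂ i| + α * ∑ i, |e i| := by
          grw [hcontract]
  rw [div_mul_eq_mul_div, le_div_iff₀ (sub_pos.mpr hα1)]
  linarith

theorem pagerank_perturbation_bound {N : ℕ} (P₁ P₂ : Matrix (Fin N) (Fin N) ℝ)
    (h1nonneg : ∀ i j, 0 ≤ P₁ i j) (h1row : ∀ i, ∑ j, P₁ i j = 1)
    (h2nonneg : ∀ i j, 0 ≤ P₂ i j) (h2row : ∀ i, ∑ j, P₂ i j = 1)
    (α : ℝ) (hα0 : 0 < α) (hα1 : α < 1) (z π₁ π₂ : Fin N → ℝ)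
    (hπ₁ : π₁ = α • P₁ᵀ.mulVec π₁ + (1 - α) • z)
    (hπ₂ : π₂ = α • P₂ᵀ.mulVec π₂ + (1 - α) • z) :
    ∑ i, |π₁ i - π₂ i| ≤ (α / (1 - α)) * ∑ i, |(P₁ - P₂)ᵀ.mulVec π₂ i| :=
  pagerank_perturbation_bound_general P₁ P₂ h1nonneg h1row α hα0 hα1 z π₁ π₂ hπ₁ hπ₂
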